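/- arXiv:1608.02242 — 4 statements merged into one kernel-verified Lean document; each statement's English description precedes it below -/
import Mathlib

section
/- With the notation of the context, for every n ∈ ℕ: cl(E_n) ∩ (∂βX × ∂βX) = ⋃_{w ∈ F_S, |w| ≤ n} {(η, τ̄(w)(η)) : η ∈ ∂βX}. That is, the boundary part of the closed n-neighbourhood of the diagonal equals the union, over words w in the free group on S of length at most n, of the boundary parts of the τ-diagonals A_w = {(η, τ̄(w)(η))}. -/
open scoped BigOperators symmDiff Classical

universe u v

/-- A sofic approximation of a group `Γ` generated by a finite symmetric set `S`. -/
structure SoficApprox (Γ : Type u) [Group Γ] (S : Finset Γ) where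
  F : ℕ → Finset Γ
  F_mono : Monotone F
  F_one : ∀ i, (1 : Γ) ∈ F i
  F_exhausts : ∀ g : Γ, ∃ i, g ∈ F i
  eps : ℕ → ℝ
  eps_pos : ∀ i, 0 < eps i
  eps_lim : Filter.Tendsto eps Filter.atTop (nhds 0)
  X : ℕ → Type
  finX : ∀ i, Finite (X i)
  neX : ∀ i, Nonempty (X i)
  sigma : (i : ℕ) → Γ → Equiv.Perm (X i)
  Y : (i : ℕ) → Set (X i)
  Y_large : ∀ i, (1 - eps i) * (Nat.card (X i) : ℝ) ≤ ((Y i).ncard : ℝ)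
  sigma_mul : ∀ i, ∀ g ∈ F i, ∀ h ∈ F i, ∀ y ∈ Y i, sigma i g (sigma i h y) = sigma i (g * h) y
  sigma_free : ∀ i, ∀ g ∈ F i, g ≠ 1 → ∀ y ∈ Y i, sigma i g y ≠ y

namespace SoficApprox

variable {Γ : Type u} [Group Γ] {S : Finset Γ}

/-- The total space (space of graphs) `X = ⨆ i, X i`. -/
abbrev Total (A : SoficApprox Γ S) : Type := Σ i, A.X i

/-- The bijection `σ(g)` of the total space acting as `σ_i(g)` on each `X i`. -/
def perm (A : SoficApprox Γ S) (g : Γ) : Equiv.Perm A.Total :=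
  Equiv.sigmaCongrRight fun i => A.sigma i g

/-- The continuous extension `σ̄(g)` of `σ(g)` to the Stone–Čech compactification. -/
def permBar (A : SoficApprox Γ S) (g : Γ) : Ultrafilter A.Total → Ultrafilter A.Total :=
  Ultrafilter.map (A.perm g)

/-- The union `Y = ⨆ i, Y i` inside the total space. -/
def Ytot (A : SoficApprox Γ S) : Set A.Total := {p | p.2 ∈ A.Y p.1}

/-- `∂Y`: free ultrafilters containing `Y`. -/
def bdY (A : SoficApprox Γ S) : Set (Ultrafilter A.Total) :=
  {η | (∀ p : A.Total, η ≠ pure p) ∧ A.Ytot ∈ η}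

/-- The core `Z = ⋂_{g ∈ Γ} σ̄(g)''(∂Y)` of the sofic boundary. -/
def core (A : SoficApprox Γ S) : Set (Ultrafilter A.Total) :=
  ⋂ g : Γ, A.permBar g '' A.bdY

/-- The `S`-labelled graph structure on `X i`, with edges `{x, σ_i(s)(x)}` for `s ∈ S`. -/
def graph (A : SoficApprox Γ S) (i : ℕ) : SimpleGraph (A.X i) where
  Adj x y := x ≠ y ∧ ∃ s ∈ S, A.sigma i s x = y ∨ A.sigma i s y = x
  symm := ⟨fun x y h => ⟨h.1.symm, by obtain ⟨s, hs, h'⟩ := h.2; exact ⟨s, hs, h'.symm⟩⟩⟩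
  loopless := ⟨fun x h => h.1 rfl⟩

/-- An admissible metric on the total space: a metric restricting to the edge-path
metric on each `X i` and with distances between distinct components tending to `∞`. -/
def Admissible (A : SoficApprox Γ S) (d : A.Total → A.Total → ℝ) : Prop :=
  (∀ p q, d p q = d q p) ∧
  (∀ p q r, d p r ≤ d p q + d q r) ∧
  (∀ p q, d p q = 0 ↔ p = q) ∧
  (∀ p q, 0 ≤ d p q) ∧
  (∀ (i : ℕ) (x y : A.X i), d ⟨i, x⟩ ⟨i, y⟩ = ((A.graph i).dist x y : ℝ)) ∧
  (∀ R : ℝ, ∃ N : ℕ, ∀ i j : ℕ, i ≠ j → N ≤ i + j →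
      ∀ (x : A.X i) (y : A.X j), R < d ⟨i, x⟩ ⟨j, y⟩)

/-- The entourage `E_R` viewed inside `βX × βX`. -/
def ER (A : SoficApprox Γ S) (d : A.Total → A.Total → ℝ) (R : ℝ) :
    Set (Ultrafilter A.Total × Ultrafilter A.Total) :=
  {p | ∃ a b : A.Total, d a b ≤ R ∧ p = (pure a, pure b)}

end SoficApprox

/-- Word length of `g` with respect to the generating set `S`. -/
noncomputable def wordLength {Γ : Type u} [Group Γ] (S : Finset Γ) (g : Γ) : ℕ :=
  sInf {n | ∃ l : List Γ, (∀ x ∈ l, x ∈ S) ∧ l.length = n ∧ l.prod = g}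

/-- Word length of an element of a free group. -/
noncomputable def fgLength {α : Type v} (w : FreeGroup α) : ℕ :=
  sInf {n | ∃ l : List (α × Bool), l.length = n ∧ FreeGroup.mk l = w}

/-- The canonical homomorphism `F_S → Γ` extending the inclusion `S ↪ Γ`. -/
noncomputable def pihom {Γ : Type u} [Group Γ] (S : Finset Γ) : FreeGroup ↥S →* Γ :=
  FreeGroup.lift fun s => (s : Γ)

/-- The homomorphism `τ : F_S → Sym(X)` with `τ(s) = σ(s)` for `s ∈ S`. -/
noncomputable def SoficApprox.tau {Γ : Type u} [Group Γ] {S : Finset Γ}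
    (A : SoficApprox Γ S) : FreeGroup ↥S →* Equiv.Perm A.Total :=
  FreeGroup.lift fun s => A.perm (s : Γ)

/-!
A pair of points at distance at most `n` that lies in a component `X i` of large index `i` is
joined by a word of length at most `n` in the letters `σ_i(s)^{±1}`, because distances between
distinct components are large there. A free ultrafilter contains the union of the components of
large index, so a free point of `cl(E_n)` lies in the closure of one of the finitely many sets
`{(pure x, pure (τ(w) x))}` with `|w| ≤ n`. In `βX` that closure is the graph of the continuous
map `τ̄(w)`.
-/

open Set Filter Topology

section FreeGroupLength

variable {α : Type v}

lemma fgLength_mk_le (l : List (α × Bool)) : fgLength (FreeGroup.mk l) ≤ l.length :=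
  Nat.sInf_le ⟨l, rfl, rfl⟩

lemma exists_length_eq_fgLength (w : FreeGroup α) :
    ∃ l : List (α × Bool), l.length = fgLength w ∧ FreeGroup.mk l = w :=
  Nat.sInf_mem (s := {n | ∃ l : List (α × Bool), l.length = n ∧ FreeGroup.mk l = w})
    ⟨w.toWord.length, w.toWord, rfl, FreeGroup.mk_toWord⟩

lemma fgLength_one : fgLength (1 : FreeGroup α) = 0 :=
  Nat.le_zero.1 (fgLength_mk_le [])

lemma fgLength_mul_le (u v : FreeGroup α) : fgLength (u * v) ≤ fgLength u + fgLength v := by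
  obtain ⟨l, hl, rfl⟩ := exists_length_eq_fgLength u
  obtain ⟨l', hl', rfl⟩ := exists_length_eq_fgLength v
  rw [← hl, ← hl', ← List.length_append, FreeGroup.mul_mk]
  exact fgLength_mk_le _

lemma finite_setOf_fgLength_le [Finite α] (n : ℕ) :
    {w : FreeGroup α | fgLength w ≤ n}.Finite := by
  refine ((List.finite_length_le (α × Bool) n).image FreeGroup.mk).subset ?_
  intro w hw
  obtain ⟨l, hl, hlw⟩ := exists_length_eq_fgLength w
  exact ⟨l, hl.trans_le hw, hlw⟩

end FreeGroupLength

namespace Ultrafilter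

variable {α : Type v} {β : Type*}

lemma continuous_map (f : α → β) : Continuous (Ultrafilter.map f) := by
  refine ultrafilterBasis_is_basis.continuous_iff.2 ?_
  rintro _ ⟨s, rfl⟩
  exact ultrafilter_isOpen_basic (f ⁻¹' s)

lemma closure_range_pure_prod_pure (f : α → β) :
    closure (range fun a => ((pure a : Ultrafilter α), (pure (f a) : Ultrafilter β))) =
      {p | p.2 = Ultrafilter.map f p.1} := by
  set φ : Ultrafilter α → Ultrafilter α × Ultrafilter β := fun η => (η, Ultrafilter.map f η)
  have hφ : Continuous φ := continuous_id.prodMk (continuous_map f)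
  have hgraph : {p : Ultrafilter α × Ultrafilter β | p.2 = Ultrafilter.map f p.1} = range φ :=
    Set.ext fun p => ⟨fun hp => ⟨p.1, Prod.ext rfl hp.symm⟩, by rintro ⟨η, rfl⟩; rfl⟩
  have hrange : (range fun a => ((pure a : Ultrafilter α), (pure (f a) : Ultrafilter β))) =
      φ '' range pure := by
    rw [← range_comp]
    simp only [φ, Function.comp_def, map_pure]
  have hclosed : IsClosed {p : Ultrafilter α × Ultrafilter β | p.2 = Ultrafilter.map f p.1} :=
    isClosed_eq continuous_snd ((continuous_map f).comp continuous_fst)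
  refine (closure_minimal ?_ hclosed).antisymm ?_
  · rintro _ ⟨a, rfl⟩
    exact (map_pure f a).symm
  · rw [hgraph, hrange, ← image_univ, ← denseRange_pure.closure_range]
    exact image_closure_subset_closure_image hφ

lemma le_cofinite_of_ne_pure {η : Ultrafilter α} (hη : ∀ a, η ≠ pure a) :
    (η : Filter α) ≤ cofinite :=
  η.le_cofinite_or_eq_pure.resolve_right fun ⟨a, ha⟩ => hη a ha

lemma map_equiv_ne_pure (e : α ≃ β) {η : Ultrafilter α} (hη : ∀ a, η ≠ pure a) (b : β) :
    Ultrafilter.map e η ≠ pure b := by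
  intro hb
  apply hη (e.symm b)
  rw [← map_pure, ← hb, map_map, e.symm_comp_self, map_id]

end Ultrafilter

namespace SoficApprox

variable {Γ : Type u} [Group Γ] {S : Finset Γ} (A : SoficApprox Γ S)

noncomputable def tauOn (i : ℕ) : FreeGroup ↥S →* Equiv.Perm (A.X i) :=
  FreeGroup.lift fun s => A.sigma i s

lemma tau_apply (w : FreeGroup ↥S) (i : ℕ) (x : A.X i) :
    A.tau w ⟨i, x⟩ = ⟨i, A.tauOn i w x⟩ := by
  have : A.tau = (Equiv.Perm.sigmaCongrRightHom A.X).comp (MonoidHom.pi A.tauOn) :=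
    FreeGroup.ext_hom _ _ fun _ => by simp [tau, tauOn, perm, MonoidHom.pi]
  rw [this]
  rfl

lemma tauOn_mk_singleton (i : ℕ) (a : ↥S × Bool) :
    A.tauOn i (FreeGroup.mk [a]) = cond a.2 (A.sigma i a.1) (A.sigma i a.1)⁻¹ := by
  simp [tauOn, FreeGroup.lift_mk]

lemma graph_adj_or_eq_tauOn_mk_singleton {i : ℕ} (a : ↥S × Bool) (x : A.X i) :
    (A.graph i).Adj x (A.tauOn i (FreeGroup.mk [a]) x) ∨ x = A.tauOn i (FreeGroup.mk [a]) x := by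
  refine (em _).symm.imp (fun hne => ⟨hne, a.1, a.1.2, ?_⟩) id
  rcases a with ⟨s, _ | _⟩
  · exact Or.inr (by simp [tauOn_mk_singleton])
  · exact Or.inl (by simp [tauOn_mk_singleton])

lemma exists_tauOn_mk_singleton_eq_of_adj {i : ℕ} {x y : A.X i} (h : (A.graph i).Adj x y) :
    ∃ a : ↥S × Bool, A.tauOn i (FreeGroup.mk [a]) x = y := by
  obtain ⟨-, s, hs, hxy | hyx⟩ := h
  · exact ⟨(⟨s, hs⟩, true), by simpa [tauOn_mk_singleton] using hxy⟩
  · exact ⟨(⟨s, hs⟩, false), by simp [tauOn_mk_singleton, ← hyx]⟩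

lemma graph_dist_tauOn_le {i : ℕ} (hconn : (A.graph i).Connected) (w : FreeGroup ↥S)
    (x : A.X i) : (A.graph i).dist x (A.tauOn i w x) ≤ fgLength w := by
  obtain ⟨l, hl, rfl⟩ := exists_length_eq_fgLength w
  rw [← hl]
  clear hl
  induction l with
  | nil =>
    rw [← FreeGroup.one_eq_mk, map_one, Equiv.Perm.one_apply, SimpleGraph.dist_self]
    exact le_rfl
  | cons a l ih =>
    set z := A.tauOn i (FreeGroup.mk l) x
    have hstep : (A.graph i).dist z (A.tauOn i (FreeGroup.mk [a]) z) ≤ 1 := by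
      rcases A.graph_adj_or_eq_tauOn_mk_singleton a z with hadj | heq
      · exact (SimpleGraph.dist_eq_one_iff_adj.2 hadj).le
      · rw [← heq, SimpleGraph.dist_self]
        exact zero_le_one
    have hsplit : FreeGroup.mk (a :: l) = FreeGroup.mk [a] * FreeGroup.mk l := by
      rw [FreeGroup.mul_mk]
      rfl
    rw [hsplit, map_mul, Equiv.Perm.mul_apply, List.length_cons]
    exact hconn.dist_triangle.trans (add_le_add ih hstep)

lemma exists_tauOn_eq_of_walk {i : ℕ} {x y : A.X i} (p : (A.graph i).Walk x y) :
    ∃ w : FreeGroup ↥S, fgLength w ≤ p.length ∧ A.tauOn i w x = y := by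
  induction p with
  | nil => exact ⟨1, by simp [fgLength_one], rfl⟩
  | cons h p ih =>
    obtain ⟨a, ha⟩ := A.exists_tauOn_mk_singleton_eq_of_adj h
    obtain ⟨w, hw, hwy⟩ := ih
    refine ⟨w * FreeGroup.mk [a], ?_, by rw [map_mul, Equiv.Perm.mul_apply, ha, hwy]⟩
    calc fgLength (w * FreeGroup.mk [a]) ≤ fgLength w + fgLength (FreeGroup.mk [a]) :=
          fgLength_mul_le _ _
      _ ≤ p.length + 1 := add_le_add hw (fgLength_mk_le _)
      _ = (SimpleGraph.Walk.cons h p).length := rfl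

lemma finite_setOf_fst_lt (N : ℕ) : {q : A.Total | q.1 < N}.Finite :=
  (finite_Iio N).preimage' fun i _ => by
    have := A.finX i
    refine (finite_range (Sigma.mk i)).subset ?_
    rintro ⟨j, x⟩ rfl
    exact ⟨x, rfl⟩

variable {A} {d : A.Total → A.Total → ℝ}

lemma Admissible.dist_mk_mk (hd : A.Admissible d) {i : ℕ} (x y : A.X i) :
    d ⟨i, x⟩ ⟨i, y⟩ = (A.graph i).dist x y :=
  hd.2.2.2.2.1 i x y

lemma Admissible.fst_eq_of_dist_le (hd : A.Admissible d) (R : ℝ) :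
    ∃ N : ℕ, ∀ a b : A.Total, N ≤ a.1 → d a b ≤ R → a.1 = b.1 := by
  obtain ⟨N, hN⟩ := hd.2.2.2.2.2 R
  refine ⟨N, fun ⟨i, x⟩ ⟨j, y⟩ hi hab => ?_⟩
  by_contra hij
  exact (hN i j hij (hi.trans (Nat.le_add_right i j)) x y).not_ge hab

lemma Admissible.dist_tau_le (hd : A.Admissible d) (hconn : ∀ i, (A.graph i).Connected)
    (w : FreeGroup ↥S) (q : A.Total) : d q (A.tau w q) ≤ fgLength w := by
  obtain ⟨i, x⟩ := q
  rw [A.tau_apply, hd.dist_mk_mk]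
  exact_mod_cast A.graph_dist_tauOn_le (hconn i) w x

lemma Admissible.exists_tau_eq_of_dist_le (hd : A.Admissible d)
    (hconn : ∀ i, (A.graph i).Connected) (n : ℕ) :
    ∃ N : ℕ, ∀ a b : A.Total, N ≤ a.1 → d a b ≤ n →
      ∃ w : FreeGroup ↥S, fgLength w ≤ n ∧ A.tau w a = b := by
  obtain ⟨N, hN⟩ := hd.fst_eq_of_dist_le n
  refine ⟨N, fun ⟨i, x⟩ ⟨j, y⟩ hi hab => ?_⟩
  obtain rfl : i = j := hN _ _ hi hab
  rw [hd.dist_mk_mk] at hab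
  obtain ⟨p, hp⟩ := (hconn i).exists_walk_length_eq_dist x y
  obtain ⟨w, hw, hwy⟩ := A.exists_tauOn_eq_of_walk p
  exact ⟨w, hw.trans (hp ▸ (by exact_mod_cast hab)), by rw [A.tau_apply, hwy]⟩

end SoficApprox

open SoficApprox in
theorem boundary_entourage_eq_union_tau_diagonals_general
    {Γ : Type u} [Group Γ] {S : Finset Γ}
    (A : SoficApprox Γ S)
    (hconn : ∀ i, (A.graph i).Connected)
    (d : A.Total → A.Total → ℝ) (hd : A.Admissible d)
    (n : ℕ) :
    closure (A.ER d (n : ℝ)) ∩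
        ({η : Ultrafilter A.Total | ∀ q : A.Total, η ≠ pure q} ×ˢ
         {η : Ultrafilter A.Total | ∀ q : A.Total, η ≠ pure q}) =
      ⋃ w ∈ {w : FreeGroup ↥S | fgLength w ≤ n},
        {p : Ultrafilter A.Total × Ultrafilter A.Total |
          ∃ η : Ultrafilter A.Total, (∀ q : A.Total, η ≠ pure q) ∧
            p = (η, Ultrafilter.map (A.tau w) η)} := by
  obtain ⟨N, hN⟩ := hd.exists_tau_eq_of_dist_le hconn n
  set far : Set (Ultrafilter A.Total × Ultrafilter A.Total) :=
    {u | {q : A.Total | q.1 < N}ᶜ ∈ u} ×ˢ univ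
  have hfar_open : IsOpen far := (ultrafilter_isOpen_basic _).prod isOpen_univ
  have hfar_sub : far ∩ A.ER d n ⊆ ⋃ w ∈ {w : FreeGroup ↥S | fgLength w ≤ n},
      range fun q => ((pure q : Ultrafilter A.Total), pure (A.tau w q)) := by
    rintro _ ⟨⟨hq, -⟩, q, r, hqr, rfl⟩
    obtain ⟨w, hw, rfl⟩ := hN q r (not_lt.1 hq) hqr
    exact mem_biUnion hw ⟨q, rfl⟩
  ext ⟨η, ξ⟩
  simp only [mem_inter_iff, mem_prod, mem_ofPred_eq, mem_iUnion, exists_prop]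
  constructor
  · rintro ⟨hcl, hη, -⟩
    have hηfar : (η, ξ) ∈ far :=
      ⟨Ultrafilter.le_cofinite_of_ne_pure hη (A.finite_setOf_fst_lt N).compl_mem_cofinite, trivial⟩
    have hmem := closure_mono hfar_sub (hfar_open.inter_closure ⟨hηfar, hcl⟩)
    rw [(finite_setOf_fgLength_le n).closure_biUnion] at hmem
    simp only [Ultrafilter.closure_range_pure_prod_pure, mem_iUnion, exists_prop] at hmem
    obtain ⟨w, hw, hξ⟩ := hmem
    exact ⟨w, hw, η, hη, Prod.ext rfl hξ⟩
  · rintro ⟨w, hw, η, hη, hp⟩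
    obtain ⟨rfl, rfl⟩ := Prod.mk.inj hp
    refine ⟨closure_mono ?_ ((Ultrafilter.closure_range_pure_prod_pure (A.tau w)).ge rfl), hη,
      Ultrafilter.map_equiv_ne_pure (A.tau w) hη⟩
    rintro _ ⟨q, rfl⟩
    exact ⟨q, _, (hd.dist_tau_le hconn w q).trans (by exact_mod_cast hw), rfl⟩

open SoficApprox in
/-- **The boundary of `E_n` is covered by the `τ`-diagonals.**
For a sofic approximation with connected approximating graphs and an admissible metric `d`,
the boundary part of the closed `n`-neighbourhood of the diagonal is the union, over words
`w` in the free group on `S` of length at most `n`, of the boundary parts of the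
`τ`-diagonals `A_w = {(η, τ̄(w)(η))}`. -/
theorem boundary_entourage_eq_union_tau_diagonals
    {Γ : Type u} [Group Γ] {S : Finset Γ}
    (hSsymm : ∀ s ∈ S, s⁻¹ ∈ S)
    (hSgen : Subgroup.closure (S : Set Γ) = ⊤)
    (A : SoficApprox Γ S)
    (hconn : ∀ i, (A.graph i).Connected)
    (d : A.Total → A.Total → ℝ) (hd : A.Admissible d)
    (n : ℕ) :
    closure (A.ER d (n : ℝ)) ∩
        ({η : Ultrafilter A.Total | ∀ q : A.Total, η ≠ pure q} ×ˢ
         {η : Ultrafilter A.Total | ∀ q : A.Total, η ≠ pure q}) =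
      ⋃ w ∈ {w : FreeGroup ↥S | fgLength w ≤ n},
        {p : Ultrafilter A.Total × Ultrafilter A.Total |
          ∃ η : Ultrafilter A.Total, (∀ q : A.Total, η ≠ pure q) ∧
            p = (η, Ultrafilter.map (A.tau w) η)} :=
  boundary_entourage_eq_union_tau_diagonals_general A hconn d hd n
end

section
/- For every free ultrafilter η on X with Y ∈ η and all g, h ∈ Γ, one has σ̄(g)(σ̄(h)(η)) = σ̄(gh)(η); moreover σ̄(g)(η) ≠ η for every g ∈ Γ \ {1}. In other words, the maps σ̄(g) define a free action of Γ on ∂Y. -/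
open scoped BigOperators symmDiff Classical

universe u v

/-! Multiplicativity and freeness of `σ_i` hold on `Y_i` once `i` is large enough that `F_i`
contains the elements involved, and a free ultrafilter containing `Y` lives on `Y ∩ {p | N ≤ p.1}`
for every `N`. Multiplicativity then passes to `σ̄` directly. For freeness, `σ(g)` is
fixed-point-free on such a set; the functional graph of a permutation has degree at most two, so it
has a proper 3-colouring, one of whose colour classes lies in `η` and is disjoint from its image
under `σ(g)`, which rules out `σ̄(g) η = η`. -/

open Filter

theorem SimpleGraph.colorable_succ_of_forall_degree_le {V : Type*} [Fintype V]
    (G : SimpleGraph V) [DecidableRel G.Adj] {d : ℕ} (h : ∀ v, G.degree v ≤ d) :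
    G.Colorable (d + 1) := by
  suffices ∀ s : Finset V, ∃ c : V → Fin (d + 1), ∀ x ∈ s, ∀ y ∈ s, G.Adj x y → c x ≠ c y by
    obtain ⟨c, hc⟩ := this Finset.univ
    exact ⟨SimpleGraph.Coloring.mk c fun hxy =>
      hc _ (Finset.mem_univ _) _ (Finset.mem_univ _) hxy⟩
  intro s
  induction s using Finset.induction_on with
  | empty => exact ⟨fun _ => 0, by simp⟩
  | @insert a s ha ih =>
    obtain ⟨c, hc⟩ := ih
    have hnew : ∃ k, k ∉ (G.neighborFinset a).image c := by
      by_contra! hall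
      have hlt : ((G.neighborFinset a).image c).card < Fintype.card (Fin (d + 1)) := by
        grw [Finset.card_image_le, G.card_neighborFinset_eq_degree, h a]
        simp
      exact (Finset.card_lt_iff_ne_univ _).1 hlt (Finset.eq_univ_iff_forall.2 hall)
    obtain ⟨k, hk⟩ := hnew
    have hk' : ∀ y, G.Adj a y → k ≠ c y := fun y hy hky =>
      hk (Finset.mem_image.2 ⟨y, (G.mem_neighborFinset a y).2 hy, hky.symm⟩)
    refine ⟨Function.update c a k, ?_⟩
    intro x hx y hy hxy
    rcases Finset.mem_insert.1 hx with rfl | hx <;> rcases Finset.mem_insert.1 hy with rfl | hy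
    · exact (G.irrefl hxy).elim
    · rw [Function.update_self, Function.update_of_ne hxy.ne.symm]
      exact hk' y hxy
    · rw [Function.update_self, Function.update_of_ne hxy.ne]
      exact (hk' x hxy.symm).symm
    · rw [Function.update_of_ne (ne_of_mem_of_not_mem hx ha),
        Function.update_of_ne (ne_of_mem_of_not_mem hy ha)]
      exact hc x hx y hy hxy

theorem Equiv.Perm.exists_coloring_fin_three {α : Type*} [Finite α] (π : Equiv.Perm α) :
    ∃ c : α → Fin 3, ∀ x, π x ≠ x → c (π x) ≠ c x := by
  have := Fintype.ofFinite α
  let G := SimpleGraph.fromRel fun x y => π x = y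
  have hdeg : ∀ v, G.degree v ≤ 2 := by
    intro v
    rw [← SimpleGraph.card_neighborFinset_eq_degree]
    refine (Finset.card_le_card (t := {π v, π.symm v}) ?_).trans Finset.card_le_two
    intro w hw
    obtain ⟨-, rfl | rfl⟩ := SimpleGraph.fromRel_adj _ _ _ |>.1 ((G.mem_neighborFinset v w).1 hw)
    · simp
    · simp
  obtain ⟨c⟩ := G.colorable_succ_of_forall_degree_le hdeg
  exact ⟨c, fun x hx => c.valid (by simpa [G] using hx)⟩

theorem Ultrafilter.map_ne_self_of_coloring {α ι : Type*} [Finite ι] {f : α → α}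
    {η : Ultrafilter α} {s : Set α} (hs : s ∈ η) (c : α → ι) (hc : ∀ x ∈ s, c (f x) ≠ c x) :
    η.map f ≠ η := by
  intro hfix
  obtain ⟨j, hj⟩ := (η.map c).eq_pure_of_finite
  have hfiber : c ⁻¹' {j} ∈ η := Ultrafilter.mem_map.1 (hj ▸ Ultrafilter.mem_pure.2 rfl)
  have hfiber' : f ⁻¹' (c ⁻¹' {j}) ∈ η := Ultrafilter.mem_map.1 (hfix.symm ▸ hfiber)
  obtain ⟨x, hxs, hx, hfx⟩ := η.nonempty_of_mem (inter_mem hs (inter_mem hfiber hfiber'))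
  exact hc x hxs (hfx.trans hx.symm)

theorem Ultrafilter.tendsto_sigma_fst_cofinite {ι : Type*} {X : ι → Type*} [∀ i, Finite (X i)]
    {η : Ultrafilter (Σ i, X i)} (hfree : ∀ p, η ≠ pure p) :
    Tendsto Sigma.fst (η : Filter (Σ i, X i)) cofinite := by
  have hη : (η : Filter (Σ i, X i)) ≤ cofinite :=
    η.le_cofinite_or_eq_pure.resolve_right fun ⟨p, hp⟩ => hfree p hp
  refine (Tendsto.cofinite_of_finite_preimage_singleton fun i => ?_).mono_left hη
  rw [← Set.range_sigmaMk]
  exact Set.finite_range _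

namespace SoficApprox

variable {Γ : Type u} [Group Γ] {S : Finset Γ} (A : SoficApprox Γ S)

theorem eventually_mem_F (g : Γ) : ∀ᶠ i in atTop, g ∈ A.F i := by
  obtain ⟨N, hN⟩ := A.F_exhausts g
  exact eventually_atTop.2 ⟨N, fun i hi => A.F_mono hi hN⟩

theorem perm_perm_of_mem_Ytot {g h : Γ} {p : A.Total} (hp : p ∈ A.Ytot) (hg : g ∈ A.F p.1)
    (hh : h ∈ A.F p.1) : A.perm g (A.perm h p) = A.perm (g * h) p :=
  Sigma.ext rfl (heq_of_eq (A.sigma_mul p.1 g hg h hh p.2 hp))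

theorem perm_ne_self_of_mem_Ytot {g : Γ} {p : A.Total} (hp : p ∈ A.Ytot) (hg : g ∈ A.F p.1)
    (hg1 : g ≠ 1) : A.perm g p ≠ p := fun h =>
  A.sigma_free p.1 g hg hg1 p.2 hp (eq_of_heq (Sigma.ext_iff.1 h).2)

theorem exists_coloring_perm (g : Γ) :
    ∃ c : A.Total → Fin 3, ∀ p, A.perm g p ≠ p → c (A.perm g p) ≠ c p := by
  have := A.finX
  choose c hc using fun i => (A.sigma i g).exists_coloring_fin_three
  refine ⟨fun p => c p.1 p.2, fun p hp => hc p.1 p.2 fun h => hp ?_⟩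
  exact Sigma.ext rfl (heq_of_eq h)

theorem eventually_mem_F_fst {η : Ultrafilter A.Total} (hfree : ∀ p, η ≠ pure p)
    (g : Γ) : ∀ᶠ p in (η : Filter A.Total), g ∈ A.F p.1 :=
  have := A.finX
  have hfst : Tendsto Sigma.fst (η : Filter A.Total) atTop :=
    Nat.cofinite_eq_atTop ▸ Ultrafilter.tendsto_sigma_fst_cofinite hfree
  hfst.eventually (A.eventually_mem_F g)

end SoficApprox

open SoficApprox in
theorem permBar_mul_and_free_on_bdY_general
    {Γ : Type u} [Group Γ] {S : Finset Γ}
    (A : SoficApprox Γ S)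
    (η : Ultrafilter A.Total)
    (hfree : ∀ p : A.Total, η ≠ pure p)
    (hY : A.Ytot ∈ η) :
    (∀ g h : Γ, A.permBar g (A.permBar h η) = A.permBar (g * h) η) ∧
    (∀ g : Γ, g ≠ 1 → A.permBar g η ≠ η) := by
  refine ⟨fun g h => ?_, fun g hg1 => ?_⟩
  · have hmul : A.perm g ∘ A.perm h =ᶠ[η] A.perm (g * h) := by
      filter_upwards [hY, A.eventually_mem_F_fst hfree g,
        A.eventually_mem_F_fst hfree h] with p hp hg hh
      exact A.perm_perm_of_mem_Ytot hp hg hh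
    simp only [permBar, Ultrafilter.map_map]
    exact Ultrafilter.coe_injective (Filter.map_congr hmul)
  · obtain ⟨c, hc⟩ := A.exists_coloring_perm g
    exact Ultrafilter.map_ne_self_of_coloring (inter_mem hY (A.eventually_mem_F_fst hfree g)) c
      fun p hp => hc p (A.perm_ne_self_of_mem_Ytot hp.1 hp.2 hg1)

open SoficApprox in
/-- **The `Γ`-maps define a free action on `∂Y`.**
For every free ultrafilter `η` containing `Y`, the maps `σ̄(g)` are multiplicative at `η`
(`σ̄(g)(σ̄(h)(η)) = σ̄(gh)(η)`) and free at `η` (`σ̄(g)(η) ≠ η` for `g ≠ 1`). -/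
theorem permBar_mul_and_free_on_bdY
    {Γ : Type u} [Group Γ] {S : Finset Γ}
    (hSsymm : ∀ s ∈ S, s⁻¹ ∈ S)
    (hSgen : Subgroup.closure (S : Set Γ) = ⊤)
    (A : SoficApprox Γ S)
    (η : Ultrafilter A.Total)
    (hfree : ∀ p : A.Total, η ≠ pure p)
    (hY : A.Ytot ∈ η) :
    (∀ g h : Γ, A.permBar g (A.permBar h η) = A.permBar (g * h) η) ∧
    (∀ g : Γ, g ≠ 1 → A.permBar g η ≠ η) :=
  permBar_mul_and_free_on_bdY_general A η hfree hY
end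

section
/- For every w ∈ F_S and every η ∈ Z one has τ̄(w)(η) = σ̄(π(w))(η). Consequently, if w, w′ ∈ F_S satisfy π(w) = π(w′), then τ̄(w) and τ̄(w′) agree on Z. -/
open scoped BigOperators symmDiff Classical

universe u v

/-!
The core lies in `∂Y`, and on `∂Y` the extension `σ̄` is multiplicative: a free ultrafilter
lives on the components `X i` with `i` large, where `F i` contains any given `g, h` and so
`σ_i(g) σ_i(h) = σ_i(gh)` on `Y i`. Hence `g ↦ σ̄(g)` is an action of `Γ` on the invariant
set `Z`, and `τ̄` agrees with it through `π` on the generators, hence on all words.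
-/

theorem Ultrafilter.map_congr {α β : Type*} {ζ : Ultrafilter α} {f g : α → β}
    (h : f =ᶠ[(ζ : Filter α)] g) : ζ.map f = ζ.map g :=
  Ultrafilter.coe_injective (Filter.map_congr h)

theorem Ultrafilter.map_symm_of_map_eq {α β : Type*} {e : α ≃ β} {ζ : Ultrafilter α}
    {η : Ultrafilter β} (h : ζ.map e = η) : η.map e.symm = ζ := by
  rw [← h, Ultrafilter.map_map, e.symm_comp_self, Ultrafilter.map_id]

namespace SoficApprox

open Filter

variable {Γ : Type u} [Group Γ] {S : Finset Γ} (A : SoficApprox Γ S)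

@[simp]
theorem perm_mk (g : Γ) (i : ℕ) (x : A.X i) : A.perm g ⟨i, x⟩ = ⟨i, A.sigma i g x⟩ := rfl

theorem tendsto_fst_cofinite_atTop : Tendsto (Sigma.fst : A.Total → ℕ) cofinite atTop := by
  rw [← Nat.cofinite_eq_atTop]
  refine Tendsto.cofinite_of_finite_preimage_singleton fun i => ?_
  have := A.finX i
  refine (Set.finite_range (Sigma.mk i : A.X i → A.Total)).subset ?_
  rintro ⟨j, x⟩ rfl
  exact ⟨x, rfl⟩

variable {A}

theorem le_cofinite_of_mem_bdY {ζ : Ultrafilter A.Total} (hζ : ζ ∈ A.bdY) :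
    (ζ : Filter A.Total) ≤ cofinite :=
  ζ.le_cofinite_or_eq_pure.resolve_right fun ⟨p, hp⟩ => hζ.1 p hp

theorem eventually_le_fst_of_mem_bdY {ζ : Ultrafilter A.Total} (hζ : ζ ∈ A.bdY) (N : ℕ) :
    ∀ᶠ p in (ζ : Filter A.Total), N ≤ p.1 :=
  (A.tendsto_fst_cofinite_atTop.mono_left (le_cofinite_of_mem_bdY hζ)).eventually_ge_atTop N

theorem sigma_one_apply {i : ℕ} {y : A.X i} (hy : y ∈ A.Y i) : A.sigma i 1 y = y :=
  (A.sigma i 1).injective <| by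
    rw [A.sigma_mul i 1 (A.F_one i) 1 (A.F_one i) y hy, one_mul]

theorem permBar_one_of_mem_bdY {ζ : Ultrafilter A.Total} (hζ : ζ ∈ A.bdY) :
    A.permBar 1 ζ = ζ := by
  refine (Ultrafilter.map_congr ?_).trans ζ.map_id
  filter_upwards [hζ.2] with ⟨i, y⟩ hy
  simp [sigma_one_apply hy]

theorem permBar_mul_of_mem_bdY {ζ : Ultrafilter A.Total} (hζ : ζ ∈ A.bdY) (g h : Γ) :
    A.permBar g (A.permBar h ζ) = A.permBar (g * h) ζ := by
  obtain ⟨n, hg⟩ := A.F_exhausts g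
  obtain ⟨m, hh⟩ := A.F_exhausts h
  rw [permBar, permBar, Ultrafilter.map_map]
  refine Ultrafilter.map_congr ?_
  filter_upwards [hζ.2, eventually_le_fst_of_mem_bdY hζ (max n m)] with ⟨i, y⟩ hy hi
  simp only [Function.comp_apply, perm_mk]
  rw [A.sigma_mul i g (A.F_mono (le_of_max_le_left hi) hg) h
    (A.F_mono (le_of_max_le_right hi) hh) y hy]

theorem core_subset_bdY : A.core ⊆ A.bdY := by
  intro η hη
  obtain ⟨ζ, hζ, rfl⟩ := Set.mem_iInter.1 hη 1
  rwa [permBar_one_of_mem_bdY hζ]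

theorem permBar_mem_core {η : Ultrafilter A.Total} (hη : η ∈ A.core) (g : Γ) :
    A.permBar g η ∈ A.core := by
  refine Set.mem_iInter.2 fun k => ?_
  obtain ⟨ζ, hζ, rfl⟩ := Set.mem_iInter.1 hη (g⁻¹ * k)
  exact ⟨ζ, hζ, by rw [permBar_mul_of_mem_bdY hζ, mul_inv_cancel_left]⟩

theorem map_tau_eq_permBar_pihom (w : FreeGroup S) {η : Ultrafilter A.Total}
    (hη : η ∈ A.core) : η.map (A.tau w) = A.permBar (pihom S w) η := by
  induction w using FreeGroup.induction_on generalizing η with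
  | C1 =>
    rw [map_one, map_one, Equiv.Perm.coe_one, Ultrafilter.map_id,
      permBar_one_of_mem_bdY (core_subset_bdY hη)]
  | of s => simp [tau, pihom, permBar]
  | inv_of s _ =>
    rw [map_inv, map_inv, Equiv.Perm.coe_inv]
    refine Ultrafilter.map_symm_of_map_eq ?_
    rw [tau, pihom, FreeGroup.lift_apply_of, FreeGroup.lift_apply_of]
    exact (permBar_mul_of_mem_bdY (core_subset_bdY hη) _ _).trans <| by
      rw [mul_inv_cancel, permBar_one_of_mem_bdY (core_subset_bdY hη)]
  | mul w w' ih ih' =>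
    rw [map_mul, map_mul, Equiv.Perm.coe_mul, ← Ultrafilter.map_map, ih' hη,
      ih (permBar_mem_core hη _), permBar_mul_of_mem_bdY (core_subset_bdY hη)]

end SoficApprox

open SoficApprox in
theorem tau_eq_permBar_pi_on_core_general
    {Γ : Type u} [Group Γ] {S : Finset Γ}
    (A : SoficApprox Γ S) :
    (∀ w : FreeGroup ↥S, ∀ η ∈ A.core,
        Ultrafilter.map (A.tau w) η = A.permBar (pihom S w) η) ∧
    (∀ w w' : FreeGroup ↥S, pihom S w = pihom S w' →
        ∀ η ∈ A.core, Ultrafilter.map (A.tau w) η = Ultrafilter.map (A.tau w') η) :=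
  ⟨fun w _ hη => map_tau_eq_permBar_pihom w hη, fun w w' hπ _ hη => by
    rw [map_tau_eq_permBar_pihom w hη, map_tau_eq_permBar_pihom w' hη, hπ]⟩

open SoficApprox in
/-- **On the core, the free group action factors through `Γ`.**
For every word `w ∈ F_S` and every `η` in the core `Z`, `τ̄(w)(η) = σ̄(π(w))(η)`;
consequently words with the same image under `π : F_S → Γ` act identically on `Z`. -/
theorem tau_eq_permBar_pi_on_core
    {Γ : Type u} [Group Γ] {S : Finset Γ}
    (hSsymm : ∀ s ∈ S, s⁻¹ ∈ S)
    (hSgen : Subgroup.closure (S : Set Γ) = ⊤)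
    (A : SoficApprox Γ S) :
    (∀ w : FreeGroup ↥S, ∀ η ∈ A.core,
        Ultrafilter.map (A.tau w) η = A.permBar (pihom S w) η) ∧
    (∀ w w' : FreeGroup ↥S, pihom S w = pihom S w' →
        ∀ η ∈ A.core, Ultrafilter.map (A.tau w) η = Ultrafilter.map (A.tau w') η) :=
  tau_eq_permBar_pi_on_core_general A
end

section
/- Let (X, d) be a finite nonempty metric space, let R, S, ε > 0, and let N ≥ 1 be such that |{y ∈ X : d(x,y) ≤ R}| ≤ N for every x ∈ X. Suppose that to each x ∈ X is assigned a probability density η_x : X → [0,1] (with Σ_z η_x(z) = 1) such that η_x(z) = 0 whenever d(x,z) > S, and Σ_z |η_x(z) − η_y(z)| ≤ ε/N whenever d(x,y) ≤ R. Then there exists z₀ ∈ X such that the function φ : X → [0,1] defined by φ(x) = η_x(z₀) satisfies: Σ_x φ(x) > 0; φ(x) = 0 whenever d(x,z₀) > S; and Σ_{(x,y) : d(x,y) ≤ R} |φ(x) − φ(y)| ≤ ε · Σ_x φ(x), where the first sum is over all ordered pairs (x,y) ∈ X × X with d(x,y) ≤ R. -/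
open scoped Classical BigOperators

open Finset

/-!
Averaging over the base point: summing over `z₀`, the left-hand sides add up to
`∑_{d(x,y) ≤ R} ∑_z |η_x(z) - η_y(z)| ≤ #{pairs} · ε / N ≤ ε · |X|`, while the right-hand sides add
up to `ε · ∑_x ∑_z η_x(z) = ε · |X|`. Hence some `z₀` with positive mass satisfies the inequality.
-/

theorem Finset.exists_pos_and_le_of_sum_le {ι M : Type*} [AddCommMonoid M] [LinearOrder M]
    [IsOrderedCancelAddMonoid M] {s : Finset ι} {f g : ι → M} (hf : ∀ i ∈ s, 0 ≤ f i)
    (hg : 0 < ∑ i ∈ s, g i) (h : ∑ i ∈ s, f i ≤ ∑ i ∈ s, g i) :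
    ∃ i ∈ s, 0 < g i ∧ f i ≤ g i := by
  by_contra! hlt
  obtain ⟨j, hj, hgj⟩ := exists_lt_of_sum_lt (s := s) (f := 0) (g := g) (by simpa using hg)
  have hle : ∀ i ∈ s, g i ≤ f i := fun i hi =>
    (le_or_gt (g i) 0).elim (fun hgi => hgi.trans (hf i hi)) fun hgi => (hlt i hi hgi).le
  exact (sum_lt_sum hle ⟨j, hj, hlt j hj hgj⟩).not_ge h

theorem card_filter_rel_le_card_mul {α : Type*} [Fintype α] (r : α → α → Prop)
    [DecidableRel r] {N : ℕ} (h : ∀ x, {y | r x y}.ncard ≤ N) :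
    #{p : α × α | r p.1 p.2} ≤ Fintype.card α * N := by
  rw [card_filter, Fintype.sum_prod_type, ← smul_eq_mul, ← card_univ, ← sum_const]
  refine sum_le_sum fun x _ => ?_
  simpa [← card_filter, Set.ncard_eq_toFinset_card'] using h x

theorem exists_folner_function_of_propertyA_data_general
    {X : Type*} [MetricSpace X] [Fintype X] [Nonempty X]
    (R S ε : ℝ) (hε : 0 < ε)
    (N : ℕ) (hN : 1 ≤ N)
    (hball : ∀ x : X, ({y : X | dist x y ≤ R}).ncard ≤ N)
    (η : X → X → ℝ)
    (hsum : ∀ x, ∑ z, η x z = 1)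
    (hsupp : ∀ x z, S < dist x z → η x z = 0)
    (hvar : ∀ x y, dist x y ≤ R → ∑ z, |η x z - η y z| ≤ ε / N) :
    ∃ z₀ : X,
      0 < ∑ x, η x z₀ ∧
      (∀ x, S < dist x z₀ → η x z₀ = 0) ∧
      ∑ p ∈ Finset.univ.filter (fun p : X × X => dist p.1 p.2 ≤ R),
          |η p.1 z₀ - η p.2 z₀| ≤ ε * ∑ x, η x z₀ := by
  set P := Finset.univ.filter (fun p : X × X => dist p.1 p.2 ≤ R)
  have hmass : ∑ z, ε * ∑ x, η x z = ε * Fintype.card X := by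
    simp [← mul_sum, sum_comm (γ := X), hsum]
  have hN' : (0 : ℝ) < N := by exact_mod_cast hN
  have hP : (#P : ℝ) ≤ Fintype.card X * N := by
    exact_mod_cast card_filter_rel_le_card_mul (fun x y : X => dist x y ≤ R) hball
  have haverage : ∑ z, ∑ p ∈ P, |η p.1 z - η p.2 z| ≤ ∑ z, ε * ∑ x, η x z := calc
    ∑ z, ∑ p ∈ P, |η p.1 z - η p.2 z| = ∑ p ∈ P, ∑ z, |η p.1 z - η p.2 z| := sum_comm
    _ ≤ ∑ _p ∈ P, ε / N := sum_le_sum fun p hp => hvar p.1 p.2 (mem_filter.1 hp).2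
    _ = #P * (ε / N) := by rw [sum_const, nsmul_eq_mul]
    _ ≤ Fintype.card X * N * (ε / N) := by gcongr
    _ = ∑ z, ε * ∑ x, η x z := by rw [hmass]; field_simp
  obtain ⟨z₀, -, hpos, hle⟩ := exists_pos_and_le_of_sum_le
    (fun z _ => sum_nonneg fun p _ => abs_nonneg _) (by rw [hmass]; positivity) haverage
  exact ⟨z₀, pos_of_mul_pos_right hpos hε.le, fun x => hsupp x z₀, hle⟩

/-- **The averaging step for property A families.**
Let `(X, d)` be a finite nonempty metric space, `R, S, ε > 0`, and `N ≥ 1` with all closed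
`R`-balls of cardinality at most `N`. If each `x ∈ X` carries a probability density `η_x`
supported in the `S`-ball around `x` with `Σ_z |η_x(z) − η_y(z)| ≤ ε/N` whenever
`d(x,y) ≤ R`, then there is `z₀ ∈ X` such that `φ(x) := η_x(z₀)` has positive total mass,
is supported in the `S`-ball around `z₀`, and satisfies
`Σ_{d(x,y) ≤ R} |φ(x) − φ(y)| ≤ ε · Σ_x φ(x)`. -/
theorem exists_folner_function_of_propertyA_data
    {X : Type*} [MetricSpace X] [Fintype X] [Nonempty X]
    (R S ε : ℝ) (hR : 0 < R) (hS : 0 < S) (hε : 0 < ε)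
    (N : ℕ) (hN : 1 ≤ N)
    (hball : ∀ x : X, ({y : X | dist x y ≤ R}).ncard ≤ N)
    (η : X → X → ℝ)
    (h01 : ∀ x z, 0 ≤ η x z ∧ η x z ≤ 1)
    (hsum : ∀ x, ∑ z, η x z = 1)
    (hsupp : ∀ x z, S < dist x z → η x z = 0)
    (hvar : ∀ x y, dist x y ≤ R → ∑ z, |η x z - η y z| ≤ ε / N) :
    ∃ z₀ : X,
      0 < ∑ x, η x z₀ ∧
      (∀ x, S < dist x z₀ → η x z₀ = 0) ∧
      ∑ p ∈ Finset.univ.filter (fun p : X × X => dist p.1 p.2 ≤ R),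
          |η p.1 z₀ - η p.2 z₀| ≤ ε * ∑ x, η x z₀ :=
  exists_folner_function_of_propertyA_data_general R S ε hε N hN hball η hsum hsupp hvar
end
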